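/- arXiv:1208.1822 — 3 statements merged into one kernel-verified Lean document; each statement's English description precedes it below -/
import Mathlib

section
/- For positive integers x and k the following three conditions are equivalent: (a) x ≤ ξ_k, where ξ_k = Σ_{j=1}^k C(2j−1, j); (b) ∂_{k−1}(x) ≥ x; (c) x^{MG(k)} ≥ 2x. -/
noncomputable section

open MvPolynomial

/-- The total degree of an exponent vector. -/
def edeg {n : ℕ} (a : Fin n →₀ ℕ) : ℕ := ∑ i, a i

/-- An exponent vector is squarefree if every exponent is at most 1. -/
def IsSqfree {n : ℕ} (a : Fin n →₀ ℕ) : Prop := ∀ i, a i ≤ 1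

/-- The set of exponent vectors of monomials belonging to the ideal `I`. -/
def expSet {K : Type} [Field K] {n : ℕ} (I : Ideal (MvPolynomial (Fin n) K)) :
    Set (Fin n →₀ ℕ) := {a | (monomial a (1 : K)) ∈ I}

/-- `I` is generated by monomials `x^a` with `a` satisfying the predicate `P`. -/
def GenBy {K : Type} [Field K] {n : ℕ} (I : Ideal (MvPolynomial (Fin n) K))
    (P : (Fin n →₀ ℕ) → Prop) : Prop :=
  ∃ G : Set (Fin n →₀ ℕ), (∀ a ∈ G, P a) ∧
    I = Ideal.span ((fun a => (monomial a (1 : K))) '' G)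

/-- `I` is a monomial ideal. -/
def IsMonomialIdeal {K : Type} [Field K] {n : ℕ} (I : Ideal (MvPolynomial (Fin n) K)) : Prop :=
  GenBy I fun _ => True

/-- `I` is a squarefree monomial ideal. -/
def IsSqfreeMonomialIdeal {K : Type} [Field K] {n : ℕ}
    (I : Ideal (MvPolynomial (Fin n) K)) : Prop := GenBy I IsSqfree

/-- `x^a >_lex x^b` in the lexicographic order with `x_1 > x_2 > ⋯ > x_n`. -/
def lexGT {n : ℕ} (a b : Fin n →₀ ℕ) : Prop :=
  ∃ i : Fin n, (∀ j : Fin n, j < i → a j = b j) ∧ b i < a i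

/-- `I` is a lexsegment ideal. -/
def IsLexsegment {K : Type} [Field K] {n : ℕ} (I : Ideal (MvPolynomial (Fin n) K)) : Prop :=
  IsMonomialIdeal I ∧ ∀ a b : Fin n →₀ ℕ, (monomial a (1 : K)) ∈ I → edeg b = edeg a →
    lexGT b a → (monomial b (1 : K)) ∈ I

/-- `I` is a squarefree lexsegment ideal. -/
def IsSqfreeLexsegment {K : Type} [Field K] {n : ℕ}
    (I : Ideal (MvPolynomial (Fin n) K)) : Prop :=
  IsSqfreeMonomialIdeal I ∧ ∀ a b : Fin n →₀ ℕ, IsSqfree a → IsSqfree b →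
    (monomial a (1 : K)) ∈ I → edeg b = edeg a → lexGT b a → (monomial b (1 : K)) ∈ I

/-- The minimal number of generators of an ideal. -/
def mu {K : Type} [Field K] {n : ℕ} (I : Ideal (MvPolynomial (Fin n) K)) : ℕ :=
  sInf {m | ∃ G : Finset (MvPolynomial (Fin n) K), G.card = m ∧ I = Ideal.span (G : Set _)}

/-- `ξ_k = ∑_{j=1}^k C(2j-1, j)`. -/
def xi (k : ℕ) : ℕ := ∑ j ∈ Finset.Icc 1 k, (2 * j - 1).choose j

/-- The Hilbert function of `I`: the `K`-dimension of the degree-`j` component of `I`. -/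
def hilb {K : Type} [Field K] {n : ℕ} (I : Ideal (MvPolynomial (Fin n) K)) (j : ℕ) : ℕ :=
  Module.finrank K ↥((Submodule.restrictScalars K I) ⊓ homogeneousSubmodule (Fin n) K j)

/-- The Hilbert function of `I` extended to all integer degrees. -/
def hilbZ {K : Type} [Field K] {n : ℕ} (I : Ideal (MvPolynomial (Fin n) K)) (j : ℤ) : ℕ :=
  if 0 ≤ j then hilb I j.toNat else 0

/-- The Hilbert function of a standard graded polynomial ring in `d` variables,
at degree `t ∈ ℤ`. -/
def polyHilb (d : ℕ) (t : ℤ) : ℕ :=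
  if t < 0 then 0 else if d = 0 then (if t = 0 then 1 else 0) else (t.toNat + (d - 1)).choose (d - 1)

/-- A (standard graded) Hilbert decomposition of `I` all of whose retracts are polynomial
rings in at least `k` variables: `I ≅ ⊕ᵢ Sᵢ(-sᵢ)` as graded `K`-vector spaces, where `Sᵢ`
is a graded algebra retract of `S`, i.e. a polynomial ring in `dd i ≥ k` variables. -/
def HilbertDecomp1 {K : Type} [Field K] {n : ℕ} (I : Ideal (MvPolynomial (Fin n) K))
    (k : ℕ) : Prop :=
  ∃ (ι : Type) (_ : Fintype ι) (dd : ι → ℕ) (s : ι → ℤ),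
    (∀ i, k ≤ dd i) ∧ ∀ j : ℤ, hilbZ I j = ∑ i, polyHilb (dd i) (j - s i)

/-- The Hilbert depth of `I` in the standard graded sense. -/
def hdepth1 {K : Type} [Field K] {n : ℕ} (I : Ideal (MvPolynomial (Fin n) K)) : ℕ∞ :=
  sSup {k : ℕ∞ | ∃ m : ℕ, HilbertDecomp1 I m ∧ k = m}

/-- The set of exponent vectors `u + ℕ^Z`, corresponding to the Stanley space `x^u K[Z]`. -/
def cone {n : ℕ} (u : Fin n →₀ ℕ) (Z : Finset (Fin n)) : Set (Fin n →₀ ℕ) :=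
  {a | (∀ j, u j ≤ a j) ∧ ∀ j ∉ Z, a j = u j}

/-- A Stanley decomposition, with all Stanley spaces of dimension at least `k`, of the
`ℤⁿ`-graded module whose monomial basis has exponent set `A`. -/
def StanleyPartN {n : ℕ} (A : Set (Fin n →₀ ℕ)) (k : ℕ) : Prop :=
  ∃ (ι : Type) (_ : Fintype ι) (u : ι → (Fin n →₀ ℕ)) (Z : ι → Finset (Fin n)),
    (∀ i, k ≤ (Z i).card) ∧ (∀ i, cone (u i) (Z i) ⊆ A) ∧
    (∀ a ∈ A, ∃! i, a ∈ cone (u i) (Z i))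

/-- The multigraded Stanley depth of the `ℤⁿ`-graded module whose monomial basis has
exponent set `A`. -/
def sdepthN {n : ℕ} (A : Set (Fin n →₀ ℕ)) : ℕ∞ :=
  sSup {k : ℕ∞ | ∃ m : ℕ, StanleyPartN A m ∧ k = m}

/-- A multigraded Hilbert decomposition of the monomial ideal `I`, with all retracts
polynomial rings in at least `k` variables: the multigraded Hilbert function of `I`
(which takes values 0 and 1) equals the sum of the multigraded Hilbert functions of
the shifted retracts `x^{u i} K[Z i]`. -/
def HilbertDecompN {K : Type} [Field K] {n : ℕ} (I : Ideal (MvPolynomial (Fin n) K))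
    (k : ℕ) : Prop :=
  ∃ (ι : Type) (_ : Fintype ι) (u : ι → (Fin n →₀ ℕ)) (Z : ι → Finset (Fin n)),
    (∀ i, k ≤ (Z i).card) ∧
    (∀ a : Fin n →₀ ℕ, (a ∈ expSet I ↔ ∃ i, a ∈ cone (u i) (Z i)) ∧
      (∀ i i', a ∈ cone (u i) (Z i) → a ∈ cone (u i') (Z i') → i = i'))

/-- The multigraded Hilbert depth of a monomial ideal `I`. -/
def hdepthN {K : Type} [Field K] {n : ℕ} (I : Ideal (MvPolynomial (Fin n) K)) : ℕ∞ :=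
  sSup {k : ℕ∞ | ∃ m : ℕ, HilbertDecompN I m ∧ k = m}

/-- The graded maximal ideal `(x_1, …, x_n)`. -/
def maxIdeal (K : Type) [Field K] (n : ℕ) : Ideal (MvPolynomial (Fin n) K) :=
  Ideal.span (Set.range X)

/-- The depth of a module `M` over `S = K[x_1,…,x_n]` with respect to the graded maximal
ideal: the supremum of lengths of `M`-regular sequences in `(x_1,…,x_n)`. -/
def mdepth (K : Type) [Field K] (n : ℕ) (M : Type)
    [AddCommGroup M] [Module (MvPolynomial (Fin n) K) M] : ℕ∞ :=
  sSup {k : ℕ∞ | ∃ rs : List (MvPolynomial (Fin n) K),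
    (∀ r ∈ rs, r ∈ maxIdeal K n) ∧ RingTheory.Sequence.IsRegular M rs ∧ k = rs.length}

/-- The quotient module `I/J` for ideals `J ≤ I`. -/
def quotMod {K : Type} [Field K] {n : ℕ} (I J : Ideal (MvPolynomial (Fin n) K)) : Type :=
  ↥I ⧸ (Submodule.comap (Submodule.subtype I) J)

instance {K : Type} [Field K] {n : ℕ} (I J : Ideal (MvPolynomial (Fin n) K)) :
    AddCommGroup (quotMod I J) := by unfold quotMod; infer_instance

instance {K : Type} [Field K] {n : ℕ} (I J : Ideal (MvPolynomial (Fin n) K)) :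
    Module (MvPolynomial (Fin n) K) (quotMod I J) := by unfold quotMod; infer_instance

/-- `ρ_j(I\J)`: the number of squarefree monomials of degree `j` in `I ∖ J`. -/
def rho {K : Type} [Field K] {n : ℕ} (I J : Ideal (MvPolynomial (Fin n) K)) (j : ℕ) : ℕ :=
  Set.ncard {a : Fin n →₀ ℕ | IsSqfree a ∧ edeg a = j ∧ a ∈ expSet I ∧ a ∉ expSet J}

/-- `ρ_j(I)`: the number of squarefree monomials of degree `j` in `I`. -/
def rhoI {K : Type} [Field K] {n : ℕ} (I : Ideal (MvPolynomial (Fin n) K)) (j : ℕ) : ℕ :=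
  Set.ncard {a : Fin n →₀ ℕ | IsSqfree a ∧ edeg a = j ∧ a ∈ expSet I}

/-- `I` is a stable monomial ideal. Here `j` plays the role of `m(u)`, the largest index of
a variable dividing `u = x^a`. -/
def IsStable {K : Type} [Field K] {n : ℕ} (I : Ideal (MvPolynomial (Fin n) K)) : Prop :=
  IsMonomialIdeal I ∧ ∀ a : Fin n →₀ ℕ, (monomial a (1 : K)) ∈ I →
    ∀ j : Fin n, a j ≠ 0 → (∀ l, j < l → a l = 0) → ∀ i, i < j →
      (monomial (a + Finsupp.single i 1 - Finsupp.single j 1) (1 : K)) ∈ I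

/-- `I` is a squarefree stable monomial ideal. -/
def IsSqfreeStable {K : Type} [Field K] {n : ℕ} (I : Ideal (MvPolynomial (Fin n) K)) : Prop :=
  IsSqfreeMonomialIdeal I ∧ ∀ a : Fin n →₀ ℕ, IsSqfree a → (monomial a (1 : K)) ∈ I →
    ∀ j : Fin n, a j ≠ 0 → (∀ l, j < l → a l = 0) → ∀ i, i < j → a i = 0 →
      (monomial (a + Finsupp.single i 1 - Finsupp.single j 1) (1 : K)) ∈ I

/-- `I` is a squarefree strongly stable monomial ideal. -/
def IsSqfreeStronglyStable {K : Type} [Field K] {n : ℕ}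
    (I : Ideal (MvPolynomial (Fin n) K)) : Prop :=
  IsSqfreeMonomialIdeal I ∧ ∀ a : Fin n →₀ ℕ, IsSqfree a → (monomial a (1 : K)) ∈ I →
    ∀ i : Fin n, a i ≠ 0 → ∀ j, j < i → a j = 0 →
      (monomial (a + Finsupp.single j 1 - Finsupp.single i 1) (1 : K)) ∈ I

/-- The exponent vectors of the minimal monomial generators of a monomial ideal:
the monomials of `I` minimal with respect to divisibility. -/
def minGens {K : Type} [Field K] {n : ℕ} (I : Ideal (MvPolynomial (Fin n) K)) :
    Set (Fin n →₀ ℕ) := {a | a ∈ expSet I ∧ ∀ b ∈ expSet I, b ≤ a → b = a}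

/-- `m(u)`: the largest index (1-based) of a variable dividing `x^a`; `0` if `a = 0`. -/
def mvar {n : ℕ} (a : Fin n →₀ ℕ) : ℕ := a.support.sup (fun i => (i : ℕ) + 1)

/-- `m(I) = max { m(u) : u ∈ G(I) }`. -/
def mIdeal {K : Type} [Field K] {n : ℕ} (I : Ideal (MvPolynomial (Fin n) K)) : ℕ :=
  sSup {m | ∃ a ∈ minGens I, m = mvar a}

open MvPolynomial

/-- The `K`-subspace `Aᵢ·xᵢ` of `S`, where `Aᵢ` is the subalgebra generated by `B`. -/
def stSpace {K : Type} [Field K] {n : ℕ} (B : Finset (MvPolynomial (Fin n) K))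
    (x : MvPolynomial (Fin n) K) : Submodule K (MvPolynomial (Fin n) K) :=
  (Subalgebra.toSubmodule (Algebra.adjoin K (B : Set (MvPolynomial (Fin n) K)))).map
    (LinearMap.mulLeft K x)

/-- A standard graded Stanley decomposition of the ideal `I` with all Stanley spaces of
depth at least `k`: a finite family of graded algebra retracts `Sᵢ = K[Bᵢ]` (generated by
`k ≤ |Bᵢ|` linearly independent linear forms) and homogeneous elements `xᵢ ∈ I` with
`Sᵢ ∩ ann(xᵢ) = 0`, such that `I = ⊕ᵢ Sᵢ xᵢ` as graded `K`-vector spaces. -/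
def StanleyDecomp1 {K : Type} [Field K] {n : ℕ} (I : Ideal (MvPolynomial (Fin n) K))
    (k : ℕ) : Prop :=
  ∃ (ι : Type) (_ : Fintype ι) (B : ι → Finset (MvPolynomial (Fin n) K))
    (x : ι → MvPolynomial (Fin n) K) (d : ι → ℕ),
      (∀ i, ∀ b ∈ B i, b ∈ homogeneousSubmodule (Fin n) K 1) ∧
      (∀ i, LinearIndependent K (fun b : (B i : Set (MvPolynomial (Fin n) K)) =>
        (b : MvPolynomial (Fin n) K))) ∧
      (∀ i, k ≤ (B i).card) ∧
      (∀ i, x i ∈ I) ∧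
      (∀ i, x i ∈ homogeneousSubmodule (Fin n) K (d i)) ∧
      (∀ i, ∀ a ∈ Algebra.adjoin K ((B i : Set (MvPolynomial (Fin n) K))),
        a * x i = 0 → a = 0) ∧
      (iSup (fun i => stSpace (B i) (x i)) = Submodule.restrictScalars K I) ∧
      (iSupIndep fun i => stSpace (B i) (x i))

/-- The standard graded Stanley depth of `I`. -/
def sdepth1 {K : Type} [Field K] {n : ℕ} (I : Ideal (MvPolynomial (Fin n) K)) : ℕ∞ :=
  sSup {k : ℕ∞ | ∃ m : ℕ, StanleyDecomp1 I m ∧ k = m}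

/-- The subspace `S₁ · V` of `S`. -/
def mulS1 {K : Type} [Field K] {n : ℕ} (V : Submodule K (MvPolynomial (Fin n) K)) :
    Submodule K (MvPolynomial (Fin n) K) :=
  Submodule.span K {p | ∃ l ∈ homogeneousSubmodule (Fin n) K 1, ∃ v ∈ V, p = l * v}

/-- A lexsegment set of monomials of degree `d`. -/
def IsLexSet {n : ℕ} (d : ℕ) (L : Set (Fin n →₀ ℕ)) : Prop :=
  (∀ a ∈ L, edeg a = d) ∧ ∀ a ∈ L, ∀ b : Fin n →₀ ℕ, edeg b = d → lexGT b a → b ∈ L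

/-- `V ⊆ S_d` is a Gotzmann space: `dim_K (S₁·V) = dim_K (S₁·lex(V))`, where `lex(V)` is
spanned by the lexsegment set of monomials of degree `d` of cardinality `dim_K V`. -/
def IsGotzmannSpace {K : Type} [Field K] {n : ℕ} (d : ℕ)
    (V : Submodule K (MvPolynomial (Fin n) K)) : Prop :=
  ∃ L : Finset (Fin n →₀ ℕ), IsLexSet (n := n) d (L : Set (Fin n →₀ ℕ)) ∧ L.card = Module.finrank K ↥V ∧
    Module.finrank K ↥(mulS1 V) =
      Module.finrank K ↥(mulS1 (Submodule.span K
        ((fun a => (monomial a (1 : K))) '' (L : Set (Fin n →₀ ℕ)))))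

/-- `I` is a homogeneous ideal in the standard grading. -/
def IsHomogeneousIdeal {K : Type} [Field K] {n : ℕ}
    (I : Ideal (MvPolynomial (Fin n) K)) : Prop :=
  ∀ p ∈ I, ∀ k : ℕ, homogeneousComponent k p ∈ I

/-- `I` is a Gotzmann ideal: each homogeneous component `I_k` is a Gotzmann space. -/
def IsGotzmannIdeal {K : Type} [Field K] {n : ℕ}
    (I : Ideal (MvPolynomial (Fin n) K)) : Prop :=
  IsHomogeneousIdeal I ∧ ∀ k : ℕ,
    IsGotzmannSpace k ((Submodule.restrictScalars K I) ⊓ homogeneousSubmodule (Fin n) K k)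

/-- `I` is generated by homogeneous elements of degree `d`. -/
def GenInDegHomog {K : Type} [Field K] {n : ℕ} (I : Ideal (MvPolynomial (Fin n) K))
    (d : ℕ) : Prop :=
  ∃ G : Set (MvPolynomial (Fin n) K), (∀ g ∈ G, g ∈ homogeneousSubmodule (Fin n) K d) ∧
    I = Ideal.span G

/-!
Write `D = x - ∂_{k-1}(x) = ∑_j (C(λ_j, j) - C(λ_j, j-1))`. The summand at `j` is negative, zero
or positive according as `λ_j ≤ 2j-2`, `λ_j = 2j-1` or `λ_j ≥ 2j`, and `ξ_k` is the number whose
representation has `λ_j = 2j-1` for all `j`. Compare `λ_k` with `2k-1`: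

* if `λ_k = 2k-1`, the top term adds `C(2k-1, k)` to both `x` and `ξ_k` and nothing to `D`, so we
  pass to `k-1`;
* if `λ_k ≤ 2k-2`, then `x < C(λ_k+1, k) ≤ ξ_k`, and `D < 0` because, by induction on `k`,
  `D ≤ max(-1, C(λ_k+1, k) - C(λ_k+1, k-1) - 1)`;
* if `λ_k ≥ 2k`, then `x ≥ C(2k, k) > ξ_k`, and `D > 0`: the top summand is at least the Catalan
  number `c_k`, while the others add up to at least `1 - c_{k-1}`, since each summand at `j` is at
  least `-c_{j-1}` and `c_j ≥ 2 c_{j-1}`.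

Finally `x^{MG(k)} = x + ∂_{k-1}(x)` by Pascal's rule.
-/

namespace Macaulay

/-- The summand `C(λ_j, j) - C(λ_j, j-1)` of `x - ∂_{k-1}(x)`, at `j = m+1` and `L = λ_j`. -/
def chooseDiff (L m : ℕ) : ℤ := L.choose (m + 1) - L.choose m

lemma chooseDiff_succ_zero (L : ℕ) : chooseDiff (L + 1) 0 = chooseDiff L 0 + 1 := by
  simp [chooseDiff]

lemma chooseDiff_succ_succ (L m : ℕ) :
    chooseDiff (L + 1) (m + 1) = chooseDiff L (m + 1) + chooseDiff L m := by
  simp only [chooseDiff, Nat.choose_succ_succ' L (m + 1), Nat.choose_succ_succ' L m]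
  push_cast
  ring

lemma chooseDiff_nonpos {L m : ℕ} (h : L ≤ 2 * m + 1) : chooseDiff L m ≤ 0 := by
  have key := Nat.choose_succ_right_eq L m
  have : L.choose (m + 1) ≤ L.choose m :=
    Nat.le_of_mul_le_mul_right (key ▸ Nat.mul_le_mul_left _ (by omega)) m.succ_pos
  simp only [chooseDiff]
  omega

lemma chooseDiff_neg {L m : ℕ} (hm : m ≤ L) (h : L ≤ 2 * m) : chooseDiff L m < 0 := by
  have key := Nat.choose_succ_right_eq L m
  have hpos : 0 < L.choose m := Nat.choose_pos hm
  have : L.choose (m + 1) < L.choose m :=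
    Nat.lt_of_mul_lt_mul_right (a := m + 1) (key ▸ Nat.mul_lt_mul_of_pos_left (by omega) hpos)
  simp only [chooseDiff]
  omega

lemma chooseDiff_pos {L m : ℕ} (h : 2 * m + 2 ≤ L) : 0 < chooseDiff L m := by
  have key := Nat.choose_succ_right_eq L m
  have hpos : 0 < L.choose m := Nat.choose_pos (by omega)
  have : L.choose m < L.choose (m + 1) :=
    Nat.lt_of_mul_lt_mul_right (a := m + 1) (key ▸ Nat.mul_lt_mul_of_pos_left (by omega) hpos)
  simp only [chooseDiff]
  omega

lemma chooseDiff_two_mul_add_one (m : ℕ) : chooseDiff (2 * m + 1) m = 0 := by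
  simp [chooseDiff, Nat.choose_symm_half]

lemma chooseDiff_nonneg {L m : ℕ} (h : 2 * m + 1 ≤ L) : 0 ≤ chooseDiff L m := by
  rcases h.eq_or_lt with rfl | h
  · exact (chooseDiff_two_mul_add_one m).ge
  · exact (chooseDiff_pos h).le

lemma chooseDiff_monotoneOn (m : ℕ) : MonotoneOn (chooseDiff · m) {L | 2 * m + 1 ≤ L} := by
  refine monotoneOn_nat_Ici_of_le_succ fun L hL => ?_
  cases m with
  | zero => simp [chooseDiff_succ_zero]
  | succ m =>
    rw [chooseDiff_succ_succ]
    linarith [chooseDiff_nonneg (L := L) (m := m) (by omega)]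

lemma chooseDiff_antitoneOn (m : ℕ) : AntitoneOn (chooseDiff · m) (Set.Iic (2 * m)) := by
  refine antitoneOn_of_succ_le Set.ordConnected_Iic fun L _ _ hL => ?_
  simp only [Order.succ_eq_add_one, Set.mem_Iic] at hL ⊢
  obtain ⟨m, rfl⟩ : ∃ m', m = m' + 1 := ⟨m - 1, by omega⟩
  rw [chooseDiff_succ_succ]
  linarith [chooseDiff_nonpos (L := L) (m := m) (by omega)]

lemma chooseDiff_two_mul (m : ℕ) : chooseDiff (2 * m) m = -catalan m := by
  have key := Nat.choose_succ_right_eq (2 * m) m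
  have hcat := succ_mul_catalan_eq_centralBinom m
  rw [Nat.centralBinom_eq_two_mul_choose] at hcat
  rw [show 2 * m - m = m by omega] at key
  have key' : ((2 * m).choose (m + 1) : ℤ) * (m + 1) = (2 * m).choose m * m := by
    exact_mod_cast key
  have hcat' : ((m : ℤ) + 1) * catalan m = (2 * m).choose m := by exact_mod_cast hcat
  have : ((m : ℤ) + 1) * (chooseDiff (2 * m) m + catalan m) = 0 := by
    simp only [chooseDiff]
    linear_combination key' + hcat'
  have hm : ((m : ℤ) + 1) ≠ 0 := by positivity
  linarith [(mul_eq_zero.mp this).resolve_left hm]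

lemma neg_catalan_le_chooseDiff (L m : ℕ) : -(catalan m : ℤ) ≤ chooseDiff L m := by
  rcases le_or_gt L (2 * m) with h | h
  · rw [← chooseDiff_two_mul]
    exact chooseDiff_antitoneOn m (Set.mem_Iic.mpr h) (Set.mem_Iic.mpr le_rfl) h
  · linarith [chooseDiff_nonneg (L := L) (m := m) h, (catalan m).zero_le]

lemma two_mul_catalan_le_catalan_succ {m : ℕ} (hm : 1 ≤ m) :
    2 * catalan m ≤ catalan (m + 1) := by
  have h1 := succ_mul_catalan_eq_centralBinom m
  have h2 := succ_mul_catalan_eq_centralBinom (m + 1)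
  have h3 := Nat.succ_mul_centralBinom_succ m
  have : (m + 2) * (2 * catalan m) ≤ (m + 2) * catalan (m + 1) := by nlinarith
  exact Nat.le_of_mul_le_mul_left this (by omega)

lemma catalan_pos (m : ℕ) : 0 < catalan m := by
  have h := succ_mul_catalan_eq_centralBinom m
  have := Nat.centralBinom_pos m
  exact Nat.pos_of_mul_pos_left (h ▸ this)

lemma catalan_le_catalan_succ (m : ℕ) : catalan m ≤ catalan (m + 1) := by
  rcases Nat.eq_zero_or_pos m with rfl | hm
  · simp [catalan_one]
  · linarith [two_mul_catalan_le_catalan_succ hm]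

lemma chooseDiff_two_mul_add_two (m : ℕ) : chooseDiff (2 * m + 2) m = catalan (m + 1) := by
  have h := chooseDiff_two_mul (m + 1)
  have hsymm : (2 * m + 2).choose (m + 2) = (2 * m + 2).choose m := by
    rw [Nat.choose_symm_of_eq_add]; omega
  simp only [chooseDiff, show 2 * (m + 1) = 2 * m + 2 by ring, hsymm] at h ⊢
  linarith

lemma catalan_sub_catalan_succ_le_chooseDiff {L m : ℕ} (hL : m + 1 ≤ L) :
    (catalan m : ℤ) - catalan (m + 1) ≤ chooseDiff L m := by
  rcases Nat.eq_zero_or_pos m with rfl | hm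
  · simp only [chooseDiff, zero_add, Nat.choose_one_right, Nat.choose_zero_right, catalan_zero,
      catalan_one]
    omega
  · have : 2 * (catalan m : ℤ) ≤ catalan (m + 1) := by
      exact_mod_cast two_mul_catalan_le_catalan_succ hm
    linarith [neg_catalan_le_chooseDiff L m]

lemma chooseDiff_add_le {L m : ℕ} {r : ℤ} (hL : m + 2 ≤ L)
    (hr : r ≤ max 0 (chooseDiff L m - 1)) :
    chooseDiff L (m + 1) + r ≤ max (-1) (chooseDiff (L + 1) (m + 1) - 1) := by
  rw [chooseDiff_succ_succ]
  by_cases hpos : 1 ≤ chooseDiff L m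
  · rw [max_eq_right (by linarith)] at hr
    exact le_max_of_le_right (by linarith)
  · have hLm : L ≤ 2 * m + 1 := by
      by_contra! h
      exact hpos (chooseDiff_pos (by omega))
    have := chooseDiff_neg (L := L) (m := m + 1) (by omega) (by omega)
    rw [max_eq_left (by linarith)] at hr
    exact le_max_of_le_left (by linarith)

lemma max_chooseDiff_le_of_lt {a L m : ℕ} (h : a < L) :
    max (-1) (chooseDiff (a + 1) m - 1) ≤ max 0 (chooseDiff L m - 1) := by
  by_cases ha : a + 1 ≤ 2 * m + 1
  · exact max_le (by norm_num) (le_max_of_le_left (by linarith [chooseDiff_nonpos ha]))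
  · have : chooseDiff (a + 1) m ≤ chooseDiff L m :=
      chooseDiff_monotoneOn m (show 2 * m + 1 ≤ a + 1 by omega) (show 2 * m + 1 ≤ L by omega)
        (by omega)
    exact max_le_max (by norm_num) (by linarith)

structure IsMacaulayRep (lam : ℕ → ℕ) (i k : ℕ) : Prop where
  one_le : 1 ≤ i
  le_apply : i ≤ lam i
  lt_succ : ∀ j, i ≤ j → j < k → lam j < lam (j + 1)

/-- `x - ∂_{k-1}(x)` for `x = ∑_{j=i}^k C(λ_j, j)`. -/
def shadowDefect (lam : ℕ → ℕ) (i k : ℕ) : ℤ := ∑ j ∈ Finset.Icc i k, chooseDiff (lam j) (j - 1)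

variable {lam : ℕ → ℕ} {i k : ℕ}

namespace IsMacaulayRep

lemma of_succ (h : IsMacaulayRep lam i (k + 1)) : IsMacaulayRep lam i k :=
  ⟨h.one_le, h.le_apply, fun j hij hjk => h.lt_succ j hij (by omega)⟩

lemma le_apply_of_le (h : IsMacaulayRep lam i k) {j : ℕ} (hij : i ≤ j) (hjk : j ≤ k) :
    j ≤ lam j := by
  induction j, hij using Nat.le_induction with
  | base => exact h.le_apply
  | succ j hij ih => exact (ih (by omega)).trans_lt (h.lt_succ j hij (by omega))

end IsMacaulayRep

lemma shadowDefect_succ (h : i ≤ k + 1) :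
    shadowDefect lam i (k + 1) = shadowDefect lam i k + chooseDiff (lam (k + 1)) k := by
  simp [shadowDefect, Finset.sum_Icc_succ_top h]

lemma shadowDefect_of_lt (h : k < i) : shadowDefect lam i k = 0 := by
  simp [shadowDefect, Finset.Icc_eq_empty_of_lt h]

lemma one_sub_catalan_le_shadowDefect (h : IsMacaulayRep lam i k) :
    1 - (catalan k : ℤ) ≤ shadowDefect lam i k := by
  induction k with
  | zero =>
    rw [shadowDefect_of_lt h.one_le, catalan_zero]
    norm_num
  | succ k ih =>
    rcases Nat.lt_or_ge (k + 1) i with hki | hik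
    · rw [shadowDefect_of_lt hki]
      linarith [(by exact_mod_cast catalan_pos (k + 1) : (0 : ℤ) < catalan (k + 1))]
    rw [shadowDefect_succ hik]
    have := catalan_sub_catalan_succ_le_chooseDiff (h.le_apply_of_le hik le_rfl)
    linarith [ih h.of_succ]

lemma shadowDefect_pos (h : IsMacaulayRep lam i (k + 1)) (hik : i ≤ k + 1)
    (htop : 2 * k + 2 ≤ lam (k + 1)) : 0 < shadowDefect lam i (k + 1) := by
  rw [shadowDefect_succ hik]
  have htop' : catalan (k + 1) ≤ chooseDiff (lam (k + 1)) k := by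
    rw [← chooseDiff_two_mul_add_two]
    exact chooseDiff_monotoneOn k (show 2 * k + 1 ≤ 2 * k + 2 by omega)
      (show 2 * k + 1 ≤ lam (k + 1) by omega) htop
  have := one_sub_catalan_le_shadowDefect h.of_succ
  have : (catalan k : ℤ) ≤ catalan (k + 1) := by exact_mod_cast catalan_le_catalan_succ k
  linarith

/-- Unless clipped at `-1`, the bound is attained by the full tail `λ_j = λ_{k+1} - (k + 1 - j)`,
`1 ≤ j ≤ k + 1`. -/
lemma shadowDefect_le (h : IsMacaulayRep lam i (k + 1)) (hik : i ≤ k + 1) :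
    shadowDefect lam i (k + 1) ≤ max (-1) (chooseDiff (lam (k + 1) + 1) k - 1) := by
  induction k with
  | zero =>
    obtain rfl : i = 1 := by have := h.one_le; omega
    simp [shadowDefect, chooseDiff_succ_zero]
  | succ k ih =>
    have hL := h.le_apply_of_le hik le_rfl
    rw [shadowDefect_succ hik]
    have hrest : shadowDefect lam i (k + 1) ≤ max 0 (chooseDiff (lam (k + 2)) k - 1) := by
      rcases Nat.lt_or_ge (k + 1) i with hki | hik'
      · rw [shadowDefect_of_lt hki]
        exact le_max_left _ _
      · exact (ih h.of_succ hik').trans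
          (max_chooseDiff_le_of_lt (h.lt_succ (k + 1) hik' (by omega)))
    linarith [chooseDiff_add_le (by omega) hrest]

lemma sum_choose_lt (h : IsMacaulayRep lam i k) (hik : i ≤ k) :
    ∑ j ∈ Finset.Icc i k, (lam j).choose j < (lam k + 1).choose k := by
  induction k, hik using Nat.le_induction with
  | base =>
    obtain ⟨i, rfl⟩ : ∃ i', i = i' + 1 := ⟨i - 1, by have := h.one_le; omega⟩
    rw [Finset.Icc_self, Finset.sum_singleton, Nat.choose_succ_succ']
    have := Nat.choose_pos (show i ≤ lam (i + 1) by have := h.le_apply; omega)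
    omega
  | succ k hik ih =>
    rw [Finset.sum_Icc_succ_top (by omega), Nat.choose_succ_succ' (lam (k + 1)) k]
    have := Nat.choose_le_choose k (h.lt_succ k hik (by omega))
    linarith [ih h.of_succ]

lemma xi_succ (k : ℕ) : xi (k + 1) = xi k + (2 * k + 1).choose (k + 1) := by
  rw [xi, Finset.sum_Icc_succ_top (by omega), show 2 * (k + 1) - 1 = 2 * k + 1 by omega, ← xi]

lemma xi_lt_choose (k : ℕ) : xi k < (2 * k).choose k := by
  induction k with
  | zero => simp [xi]
  | succ k ih =>
    rw [xi_succ, show 2 * (k + 1) = 2 * k + 1 + 1 by ring, Nat.choose_succ_succ' (2 * k + 1) k]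
    have := Nat.choose_le_choose k (show 2 * k ≤ 2 * k + 1 by omega)
    omega

lemma sum_choose_le_xi_iff (h : IsMacaulayRep lam i k) :
    ∑ j ∈ Finset.Icc i k, (lam j).choose j ≤ xi k ↔ shadowDefect lam i k ≤ 0 := by
  induction k with
  | zero =>
    simp [shadowDefect_of_lt h.one_le, Finset.Icc_eq_empty_of_lt (show 0 < i from h.one_le)]
  | succ k ih =>
    rcases Nat.lt_or_ge (k + 1) i with hki | hik
    · simp [shadowDefect_of_lt hki, Finset.Icc_eq_empty_of_lt hki]
    have hsum := Finset.sum_Icc_succ_top hik fun j => (lam j).choose j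
    rcases lt_trichotomy (lam (k + 1)) (2 * k + 1) with htop | htop | htop
    · refine iff_of_true ?_ ?_
      · have := sum_choose_lt h hik
        have := Nat.choose_le_choose (k + 1) (show lam (k + 1) + 1 ≤ 2 * k + 1 by omega)
        rw [xi_succ]
        omega
      · have hle := shadowDefect_le h hik
        have := chooseDiff_nonpos (L := lam (k + 1) + 1) (m := k) (by omega)
        rw [max_eq_left (by linarith)] at hle
        linarith
    · rw [hsum, xi_succ, shadowDefect_succ hik, htop, chooseDiff_two_mul_add_one, add_zero,
        add_le_add_iff_right]
      exact ih h.of_succ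
    · refine iff_of_false ?_ (not_le.mpr (shadowDefect_pos h hik htop))
      have := xi_lt_choose (k + 1)
      have := Nat.choose_le_choose (k + 1) (show 2 * (k + 1) ≤ lam (k + 1) by omega)
      omega

lemma shadowDefect_nonpos_iff (hi : 1 ≤ i) :
    shadowDefect lam i k ≤ 0 ↔
      ∑ j ∈ Finset.Icc i k, (lam j).choose j ≤ ∑ j ∈ Finset.Icc i k, (lam j).choose (j - 1) := by
  have : shadowDefect lam i k = ((∑ j ∈ Finset.Icc i k, (lam j).choose j : ℕ) : ℤ) -
      ((∑ j ∈ Finset.Icc i k, (lam j).choose (j - 1) : ℕ) : ℤ) := by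
    push_cast
    rw [← Finset.sum_sub_distrib]
    refine Finset.sum_congr rfl fun j hj => ?_
    rw [chooseDiff, Nat.sub_add_cancel (hi.trans (Finset.mem_Icc.mp hj).1)]
  rw [this]
  omega

lemma sum_choose_succ_eq (hi : 1 ≤ i) :
    ∑ j ∈ Finset.Icc i k, (lam j + 1).choose j =
      ∑ j ∈ Finset.Icc i k, (lam j).choose j + ∑ j ∈ Finset.Icc i k, (lam j).choose (j - 1) := by
  rw [← Finset.sum_add_distrib]
  refine Finset.sum_congr rfl fun j hj => ?_
  obtain ⟨j, rfl⟩ : ∃ j', j = j' + 1 := ⟨j - 1, by have := (Finset.mem_Icc.mp hj).1; omega⟩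
  rw [Nat.choose_succ_succ', Nat.add_sub_cancel, add_comm]

end Macaulay

theorem macaulay_xi_equiv_general (x k : ℕ) (i : ℕ) (lam : ℕ → ℕ)
    (hi1 : 1 ≤ i)
    (hinc : ∀ j, i ≤ j → j < k → lam j < lam (j + 1)) (hbot : i ≤ lam i)
    (hrep : x = ∑ j ∈ Finset.Icc i k, (lam j).choose j) :
    (x ≤ xi k ↔ x ≤ ∑ j ∈ Finset.Icc i k, (lam j).choose (j - 1)) ∧
    (x ≤ xi k ↔ 2 * x ≤ ∑ j ∈ Finset.Icc i k, (lam j + 1).choose j) := by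
  subst hrep
  have hb := (Macaulay.sum_choose_le_xi_iff ⟨hi1, hbot, hinc⟩).trans
    (Macaulay.shadowDefect_nonpos_iff hi1)
  refine ⟨hb, hb.trans ?_⟩
  rw [Macaulay.sum_choose_succ_eq hi1]
  omega

/-- Proposition `inv1`. For positive integers `x` and `k`, given the
`k`-th Macaulay representation `x = C(λ_k,k) + C(λ_{k-1},k-1) + ⋯ + C(λ_i,i)` with
`λ_k > λ_{k-1} > ⋯ > λ_i ≥ i ≥ 1`, the following are equivalent:
(a) `x ≤ ξ_k`; (b) `∂_{k-1}(x) = ∑_j C(λ_j, j-1) ≥ x`; (c) `x^{MG(k)} = ∑_j C(λ_j+1, j) ≥ 2x`. -/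
theorem macaulay_xi_equiv (x k : ℕ) (hx : 0 < x) (hk : 0 < k) (i : ℕ) (lam : ℕ → ℕ)
    (hi1 : 1 ≤ i) (hik : i ≤ k)
    (hinc : ∀ j, i ≤ j → j < k → lam j < lam (j + 1)) (hbot : i ≤ lam i)
    (hrep : x = ∑ j ∈ Finset.Icc i k, (lam j).choose j) :
    (x ≤ xi k ↔ x ≤ ∑ j ∈ Finset.Icc i k, (lam j).choose (j - 1)) ∧
    (x ≤ xi k ↔ 2 * x ≤ ∑ j ∈ Finset.Icc i k, (lam j + 1).choose j) :=
  macaulay_xi_equiv_general x k i lam hi1 hinc hbot hrep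
end
end

section
/- Let I be a monomial ideal of S = K[x_1,…,x_n] generated by monomials of degrees ≥ d. If hdepth_1(I) ≥ k for a natural number k, then H(I, d+1) ≥ k · H(I, d), where H(I, j) denotes the Hilbert function of I in degree j. -/
noncomputable section

open MvPolynomial

open MvPolynomial

/-!
In a Hilbert decomposition `I ≅ ⊕ᵢ Sᵢ(-sᵢ)` no summand is shifted below `d`: the summand
`Sᵢ(-sᵢ)` is nonzero in degree `sᵢ`, while `I` vanishes below `d`. So `H(I, d)` counts the
summands with `sᵢ = d`, and each of them contributes the `dim Sᵢ ≥ k` variables of `Sᵢ` to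
`H(I, d + 1)`.
-/

section Monomial

variable {K : Type} [Field K] {n : ℕ}

lemma edeg_eq_degree (a : Fin n →₀ ℕ) : edeg a = a.degree :=
  (Finsupp.degree_eq_sum a).symm

lemma edeg_mono {a b : Fin n →₀ ℕ} (h : a ≤ b) : edeg a ≤ edeg b :=
  Finset.sum_le_sum fun i _ => h i

lemma hilb_eq_zero_of_lt {d j : ℕ} {I : Ideal (MvPolynomial (Fin n) K)}
    (hgen : GenBy I (fun a => d ≤ edeg a)) (hj : j < d) : hilb I j = 0 := by
  obtain ⟨G, hG, rfl⟩ := hgen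
  suffices h : Submodule.restrictScalars K (Ideal.span ((fun a => monomial a (1 : K)) '' G)) ⊓
      homogeneousSubmodule (Fin n) K j = ⊥ by
    rw [hilb, h, finrank_bot]
  refine eq_bot_iff.mpr fun p ⟨hpI, hpj⟩ => (Submodule.mem_bot K).mpr ?_
  by_contra hp
  obtain ⟨b, hb⟩ := ne_zero_iff.mp hp
  obtain ⟨a, haG, hab⟩ := mem_ideal_span_monomial_image.mp hpI b (mem_support_iff.mpr hb)
  have hbj : edeg b = j := by
    rw [edeg_eq_degree, Finsupp.degree_eq_weight_one]
    exact (mem_homogeneousSubmodule _ _).mp hpj hb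
  have hda := hG a haG
  have hdeg_le := edeg_mono hab
  omega

end Monomial

lemma polyHilb_of_neg (D : ℕ) {t : ℤ} (ht : t < 0) : polyHilb D t = 0 :=
  if_pos ht

lemma polyHilb_zero (D : ℕ) : polyHilb D 0 = 1 := by
  rcases D with _ | D <;> simp [polyHilb]

lemma polyHilb_one (D : ℕ) : polyHilb D 1 = D := by
  rcases D with _ | D
  · rfl
  · simp [polyHilb, add_comm 1 D, Nat.choose_succ_self_right]

lemma mul_polyHilb_le {D k : ℕ} (hk : k ≤ D) {t : ℤ} (ht : t ≤ 0) :
    k * polyHilb D t ≤ polyHilb D (t + 1) := by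
  rcases ht.lt_or_eq with ht | rfl
  · simp [polyHilb_of_neg D ht]
  · simpa [polyHilb_zero, polyHilb_one] using hk

section HilbertDecomp

variable {K : Type} [Field K] {n : ℕ} {I : Ideal (MvPolynomial (Fin n) K)}

lemma hilbZ_natCast (I : Ideal (MvPolynomial (Fin n) K)) (j : ℕ) : hilbZ I j = hilb I j := by
  simp [hilbZ]

lemma HilbertDecomp1.mono {k m : ℕ} (h : HilbertDecomp1 I m) (hkm : k ≤ m) :
    HilbertDecomp1 I k := by
  obtain ⟨ι, _, dd, s, hdd, hH⟩ := h
  exact ⟨ι, inferInstance, dd, s, fun i => hkm.trans (hdd i), hH⟩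

lemma hilbertDecomp1_of_le_hdepth1 {k : ℕ} (hk : 0 < k) (h : (k : ℕ∞) ≤ hdepth1 I) :
    HilbertDecomp1 I k := by
  have hlt : ((k - 1 : ℕ) : ℕ∞) < hdepth1 I :=
    lt_of_lt_of_le (by exact_mod_cast Nat.sub_one_lt_of_lt hk) h
  obtain ⟨_, ⟨m, hm, rfl⟩, hkm⟩ := lt_sSup_iff.mp hlt
  have hkm : k - 1 < m := by exact_mod_cast hkm
  exact hm.mono (by omega)

lemma mul_hilb_le_of_hilbertDecomp1 {d k : ℕ} (hvan : ∀ j < d, hilb I j = 0)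
    (hI : HilbertDecomp1 I k) : k * hilb I d ≤ hilb I (d + 1) := by
  obtain ⟨ι, _, dd, s, hdd, hH⟩ := hI
  have hvanZ : ∀ j : ℤ, j < d → hilbZ I j = 0 := fun j hj => by
    unfold hilbZ
    split_ifs with hj0
    · exact hvan _ (by omega)
    · rfl
  have hs : ∀ i, (d : ℤ) ≤ s i := fun i => by
    by_contra! hsi
    have h := hH (s i)
    rw [hvanZ _ hsi, eq_comm, Finset.sum_eq_zero_iff] at h
    simpa [polyHilb_zero] using h i (Finset.mem_univ i)
  rw [← hilbZ_natCast, ← hilbZ_natCast, hH, hH, Finset.mul_sum]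
  refine Finset.sum_le_sum fun i _ => ?_
  rw [Nat.cast_succ, add_sub_right_comm]
  exact mul_polyHilb_le (hdd i) (by linarith [hs i])

end HilbertDecomp

/-- Lemma `hdepth_nec`. Let `I` be a monomial ideal of `S` generated by
monomials of degrees `≥ d`. If `hdepth_1(I) ≥ k`, then `H(I, d+1) ≥ k ⬝ H(I, d)`. -/
theorem hilb_ge_of_hdepth1_ge {K : Type} [Field K] {n d : ℕ}
    (I : Ideal (MvPolynomial (Fin n) K)) (hgen : GenBy I (fun a => d ≤ edeg a))
    (k : ℕ) (hk : (k : ℕ∞) ≤ hdepth1 I) :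
    k * hilb I d ≤ hilb I (d + 1) := by
  rcases Nat.eq_zero_or_pos k with rfl | hk0
  · simp
  exact mul_hilb_le_of_hilbertDecomp1 (fun _ hj => hilb_eq_zero_of_lt hgen hj)
    (hilbertDecomp1_of_le_hdepth1 hk0 hk)
end
end

section
/- Suppose I and I' are lexsegment ideals of S = K[x_1,…,x_n], generated by monomials of degree d and d' respectively, with μ(I) = μ(I') and d' ≥ d. Then the Hilbert series satisfy H_{I'}(T) = T^{d'−d} H_I(T); equivalently, the Hilbert functions satisfy H(I, d+δ) = H(I', d'+δ) for all δ ≥ 0. -/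
noncomputable section

open MvPolynomial

open MvPolynomial

/-!
A monomial ideal `I` generated in degree `d` is determined by the set `N` of its monomials of
degree `d`: `μ(I) = |N|`, and `H(I, d + δ)` counts the monomials of degree `d + δ` divisible by
a member of `N`. For a lexsegment ideal `N` is an initial segment of the degree-`d` monomials in
the lexicographic order, hence determined by `|N|`. Multiplication by `x₁^(d' - d)` maps `N` onto
an initial segment of degree `d'` of the same size, which must therefore be the set `N'` of
generators of `I'`; it is then a degree-shifting bijection between the monomials of `I` and `I'`.
-/

section Monomials

variable {K : Type} [Field K] {n : ℕ}

def expSetDeg (I : Ideal (MvPolynomial (Fin n) K)) (j : ℕ) : Set (Fin n →₀ ℕ) :=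
  {a | edeg a = j ∧ a ∈ expSet I}

lemma edeg_add (a b : Fin n →₀ ℕ) : edeg (a + b) = edeg a + edeg b := by
  simp only [edeg_eq_degree, map_add]

lemma finite_expSetDeg (I : Ideal (MvPolynomial (Fin n) K)) (j : ℕ) : (expSetDeg I j).Finite :=
  (Finsupp.finite_of_degree_eq j).subset fun a ha => (edeg_eq_degree a).symm.trans ha.1

lemma mem_expSet_of_le {I : Ideal (MvPolynomial (Fin n) K)} {a b : Fin n →₀ ℕ}
    (ha : a ∈ expSet I) (hab : a ≤ b) : b ∈ expSet I := by
  have hfactor : monomial b (1 : K) = monomial (b - a) 1 * monomial a 1 := by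
    rw [monomial_mul, one_mul, tsub_add_cancel_of_le hab]
  change monomial b (1 : K) ∈ I
  rw [hfactor]
  exact I.mul_mem_left _ ha

lemma finrank_span_monomial_image {S : Set (Fin n →₀ ℕ)} (hS : S.Finite) :
    Module.finrank K ↥(Submodule.span K ((fun a => monomial a (1 : K)) '' S)) = S.ncard := by
  have hinj : Function.Injective fun a : Fin n →₀ ℕ => monomial a (1 : K) :=
    monomial_left_injective one_ne_zero
  have := (hS.image fun a => monomial a (1 : K)).fintype
  have hli : LinearIndependent K
      ((↑) : ((fun a => monomial a (1 : K)) '' S) → MvPolynomial (Fin n) K) := by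
    refine LinearIndepOn.mono (v := id) ?_ (Set.image_subset_range _ _)
    simpa only [coe_basisMonomials] using
      (basisMonomials (Fin n) K).linearIndependent.linearIndepOn_id
  rw [finrank_span_set_eq_card hli, ← Set.ncard_eq_toFinset_card',
    Set.ncard_image_of_injective S hinj]

namespace GenBy

variable {I : Ideal (MvPolynomial (Fin n) K)}

lemma mem_iff {P : (Fin n →₀ ℕ) → Prop} (hI : GenBy I P) {p : MvPolynomial (Fin n) K} :
    p ∈ I ↔ ∀ b ∈ p.support, b ∈ expSet I := by
  obtain ⟨G, -, rfl⟩ := hI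
  simp [expSet, mem_ideal_span_monomial_image]

lemma restrictScalars_inf_homogeneousSubmodule {P : (Fin n →₀ ℕ) → Prop} (hI : GenBy I P)
    (j : ℕ) :
    Submodule.restrictScalars K I ⊓ homogeneousSubmodule (Fin n) K j =
      Submodule.span K ((fun a => monomial a (1 : K)) '' expSetDeg I j) := by
  apply le_antisymm
  · rintro p ⟨hpI, hpj⟩
    rw [← p.support_sum_monomial_coeff]
    refine Submodule.sum_mem _ fun b hb => ?_
    have hbj : edeg b = j := by
      rw [edeg_eq_degree]
      by_contra hne
      exact mem_support_iff.mp hb (IsHomogeneous.coeff_eq_zero hpj hne)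
    rw [← mul_one (coeff b p), ← smul_eq_mul, ← smul_monomial]
    exact Submodule.smul_mem _ _ (Submodule.subset_span ⟨b, ⟨hbj, hI.mem_iff.mp hpI b hb⟩, rfl⟩)
  · rw [Submodule.span_le]
    rintro _ ⟨b, ⟨hbj, hbI⟩, rfl⟩
    exact ⟨hbI, isHomogeneous_monomial _ ((edeg_eq_degree b).symm.trans hbj)⟩

lemma hilb_eq_ncard {P : (Fin n →₀ ℕ) → Prop} (hI : GenBy I P) (j : ℕ) :
    hilb I j = (expSetDeg I j).ncard := by
  rw [hilb, hI.restrictScalars_inf_homogeneousSubmodule,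
    finrank_span_monomial_image (finite_expSetDeg I j)]

variable {d : ℕ}

lemma expSetDeg_eq (hI : GenBy I (edeg · = d)) (j : ℕ) :
    expSetDeg I j = {b | edeg b = j ∧ ∃ a ∈ expSetDeg I d, a ≤ b} := by
  ext b
  refine and_congr_right fun _ => ⟨fun hb => ?_, fun ⟨a, ⟨_, ha⟩, hab⟩ => mem_expSet_of_le ha hab⟩
  obtain ⟨G, hGd, rfl⟩ := hI
  obtain ⟨a, haG, hab⟩ := mem_ideal_span_monomial_image.mp hb b (by simp)
  exact ⟨a, ⟨hGd a haG, Ideal.subset_span ⟨a, haG, rfl⟩⟩, hab⟩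

lemma eq_span_expSetDeg (hI : GenBy I (edeg · = d)) :
    I = Ideal.span ((fun a => monomial a (1 : K)) '' expSetDeg I d) := by
  refine le_antisymm ?_ (Ideal.span_le.mpr ?_)
  · obtain ⟨G, hGd, hG⟩ := id hI
    conv_lhs => rw [hG]
    refine Ideal.span_mono (Set.image_mono fun a ha => ⟨hGd a ha, ?_⟩)
    exact hG ▸ Ideal.subset_span ⟨a, ha, rfl⟩
  · rintro _ ⟨a, ⟨_, ha⟩, rfl⟩
    exact ha

lemma le_edeg_of_mem_expSet (hI : GenBy I (edeg · = d)) {b : Fin n →₀ ℕ}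
    (hb : b ∈ expSet I) : d ≤ edeg b := by
  obtain ⟨-, a, ⟨had, -⟩, hab⟩ := (hI.expSetDeg_eq (edeg b)).subset ⟨rfl, hb⟩
  exact had ▸ edeg_mono hab

lemma hilb_eq_zero_of_lt (hI : GenBy I (edeg · = d)) {j : ℕ} (hj : j < d) : hilb I j = 0 := by
  rw [hI.hilb_eq_ncard, Set.ncard_eq_zero (finite_expSetDeg I j), Set.eq_empty_iff_forall_notMem]
  rintro b ⟨hbj, hb⟩
  exact absurd (hI.le_edeg_of_mem_expSet hb) (by omega)

lemma hilb_eq_zero_of_expSetDeg_eq_empty (hI : GenBy I (edeg · = d))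
    (hN : expSetDeg I d = ∅) (j : ℕ) : hilb I j = 0 := by
  rw [hI.hilb_eq_ncard, hI.expSetDeg_eq, hN]
  simp

end GenBy

end Monomials

section MinimalGenerators

lemma homogeneousComponent_mul_of_le_degree {σ R : Type*} [CommSemiring R] {d : ℕ}
    {g : MvPolynomial σ R} (hg : ∀ v ∈ g.support, d ≤ v.degree) (c : MvPolynomial σ R) :
    homogeneousComponent d (c * g) = coeff 0 c • homogeneousComponent d g := by
  classical
  ext b
  rw [coeff_homogeneousComponent, coeff_smul, coeff_homogeneousComponent]
  split_ifs with hbd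
  · rw [coeff_mul, Finset.sum_eq_single (0, b), smul_eq_mul]
    · rintro ⟨u, v⟩ huv hne
      rw [Finset.HasAntidiagonal.mem_antidiagonal] at huv
      dsimp only at huv ⊢
      by_contra hcoeff
      have hv : d ≤ v.degree := hg v (mem_support_iff.mpr (right_ne_zero_of_mul hcoeff))
      have hu : u = 0 := by
        rw [← Finsupp.degree_eq_zero_iff]
        have := congrArg Finsupp.degree huv
        rw [map_add] at this
        omega
      subst hu
      exact hne (by rw [← huv, zero_add])
    · exact fun h => absurd (Finset.HasAntidiagonal.mem_antidiagonal.mpr (zero_add b)) h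
  · rw [smul_zero]

variable {K : Type} [Field K] {σ : Type*}

lemma restrictScalars_inf_homogeneousSubmodule_le_span {I : Ideal (MvPolynomial σ K)} {d : ℕ}
    (hI : ∀ p ∈ I, ∀ v ∈ p.support, d ≤ v.degree) {G : Finset (MvPolynomial σ K)}
    (hG : I = Ideal.span G) :
    Submodule.restrictScalars K I ⊓ homogeneousSubmodule σ K d ≤
      Submodule.span K (homogeneousComponent d '' (G : Set (MvPolynomial σ K))) := by
  rintro p ⟨hpI, hpd⟩
  obtain ⟨f, -, hf⟩ := Submodule.mem_span_finset.mp (hG ▸ hpI : p ∈ Ideal.span G)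
  have hp : p = ∑ g ∈ G, coeff 0 (f g) • homogeneousComponent d g := by
    have hpp : homogeneousComponent d p = p := by rw [homogeneousComponent_of_mem hpd, if_pos rfl]
    conv_lhs => rw [← hpp, ← hf, map_sum]
    refine Finset.sum_congr rfl fun g hg => ?_
    exact homogeneousComponent_mul_of_le_degree (hI g (hG ▸ Ideal.subset_span hg)) (f g)
  rw [hp]
  exact Submodule.sum_mem _ fun g hg => Submodule.smul_mem _ _
    (Submodule.subset_span (Set.mem_image_of_mem _ hg))

lemma GenBy.mu_eq_ncard {n d : ℕ} {I : Ideal (MvPolynomial (Fin n) K)}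
    (hI : GenBy I (edeg · = d)) : mu I = (expSetDeg I d).ncard := by
  classical
  have hfin := finite_expSetDeg I d
  set F := hfin.toFinset.image fun a => monomial a (1 : K)
  have hF : I = Ideal.span (F : Set (MvPolynomial (Fin n) K)) := by
    rw [Finset.coe_image, Set.Finite.coe_toFinset]
    exact hI.eq_span_expSetDeg
  refine le_antisymm ?_ (le_csInf ⟨_, F, rfl, hF⟩ ?_)
  · calc mu I ≤ F.card := Nat.sInf_le ⟨F, rfl, hF⟩
      _ ≤ hfin.toFinset.card := Finset.card_image_le
      _ = (expSetDeg I d).ncard := (Set.ncard_eq_toFinset_card _ hfin).symm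
  · rintro m ⟨G, rfl, hG⟩
    have hle := restrictScalars_inf_homogeneousSubmodule_le_span (d := d)
      (fun p hp v hv => (edeg_eq_degree v) ▸ hI.le_edeg_of_mem_expSet (hI.mem_iff.mp hp v hv)) hG
    rw [← Finset.coe_image] at hle
    calc (expSetDeg I d).ncard = hilb I d := (hI.hilb_eq_ncard d).symm
      _ ≤ Module.finrank K (Submodule.span K
            (G.image (homogeneousComponent d) : Set (MvPolynomial (Fin n) K))) :=
        Submodule.finrank_mono hle
      _ ≤ (G.image (homogeneousComponent d)).card := finrank_span_finset_le_card _
      _ ≤ G.card := Finset.card_image_le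

end MinimalGenerators

section Lex

variable {n : ℕ}

lemma lexGT_iff_toLex_lt {a b : Fin n →₀ ℕ} : lexGT a b ↔ toLex b < toLex a := by
  simp only [lexGT, Finsupp.Lex.lt_iff, ofLex_toLex, eq_comm]

lemma lexGT_or_lexGT_of_ne {a b : Fin n →₀ ℕ} (h : a ≠ b) : lexGT a b ∨ lexGT b a := by
  simp only [lexGT_iff_toLex_lt]
  exact (lt_or_gt_of_ne (toLex.injective.ne h)).symm

lemma IsLexSet.eq_of_ncard_eq {d : ℕ} {A B : Set (Fin n →₀ ℕ)} (hA : IsLexSet d A)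
    (hB : IsLexSet d B) (hAfin : A.Finite) (hBfin : B.Finite) (hcard : A.ncard = B.ncard) :
    A = B := by
  have htotal : A ⊆ B ∨ B ⊆ A := by
    by_contra! hneither
    obtain ⟨a, haA, haB⟩ := Set.not_subset.mp hneither.1
    obtain ⟨b, hbB, hbA⟩ := Set.not_subset.mp hneither.2
    rcases lexGT_or_lexGT_of_ne (ne_of_mem_of_not_mem hbB haB).symm with hab | hba
    · exact haB (hB.2 b hbB a (hA.1 a haA) hab)
    · exact hbA (hA.2 a haA b (hB.1 b hbB) hba)
  rcases htotal with hAB | hBA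
  · exact Set.eq_of_subset_of_ncard_le hAB hcard.ge hBfin
  · exact (Set.eq_of_subset_of_ncard_le hBA hcard.le hAfin).symm

lemma IsLexsegment.isLexSet_expSetDeg {K : Type} [Field K] {I : Ideal (MvPolynomial (Fin n) K)}
    (hI : IsLexsegment I) (d : ℕ) : IsLexSet d (expSetDeg I d) :=
  ⟨fun _ ha => ha.1, fun a ha b hb hba => ⟨hb, hI.2 a b ha.2 (hb.trans ha.1.symm) hba⟩⟩

lemma lexGT_tsub_of_lexGT_add {a c s : Fin n →₀ ℕ} (hsc : s ≤ c) (h : lexGT c (a + s)) :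
    lexGT (c - s) a := by
  obtain ⟨i, heq, hlt⟩ := h
  refine ⟨i, fun j hj => ?_, ?_⟩
  · have := heq j hj
    simp only [Finsupp.coe_tsub, Pi.sub_apply, Finsupp.coe_add, Pi.add_apply] at this ⊢
    omega
  · have := hsc i
    simp only [Finsupp.coe_tsub, Pi.sub_apply, Finsupp.coe_add, Pi.add_apply] at hlt ⊢
    omega

lemma IsLexSet.image_add {d : ℕ} {N : Set (Fin n →₀ ℕ)} {s : Fin n →₀ ℕ} (hN : IsLexSet d N)
    (hs : ∀ j, s j ≠ 0 → ∀ i, j ≤ i) : IsLexSet (d + edeg s) ((· + s) '' N) := by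
  refine ⟨fun _ ⟨a, ha, hsum⟩ => hsum ▸ (edeg_add a s).trans (by rw [hN.1 a ha]), ?_⟩
  rintro _ ⟨a, ha, rfl⟩ c hc hgt
  have hsc : s ≤ c := by
    intro j
    by_cases hj : s j = 0
    · simp [hj]
    obtain ⟨i, heq, hlt⟩ := hgt
    rcases (hs j hj i).lt_or_eq with hji | rfl
    · exact (heq j hji).symm ▸ le_add_self
    · exact le_of_add_le_right hlt.le
  have hcs : c - s + s = c := tsub_add_cancel_of_le hsc
  refine ⟨c - s, hN.2 a ha _ ?_ (lexGT_tsub_of_lexGT_add hsc hgt), hcs⟩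
  have := edeg_add (c - s) s
  rw [hcs, hc] at this
  omega

lemma exists_edeg_eq_of_le_edeg {e : ℕ} {a : Fin n →₀ ℕ} (he : e ≤ edeg a) :
    ∃ s : Fin n →₀ ℕ, edeg s = e ∧ ∀ j, s j ≠ 0 → ∀ i, j ≤ i := by
  cases n with
  | zero => exact ⟨0, by simp_all [edeg], fun j => j.elim0⟩
  | succ n =>
    exact ⟨Finsupp.single 0 e, by simp [edeg_eq_degree],
      fun j hj i => (Finsupp.single_apply_ne_zero.mp hj).1 ▸ Fin.zero_le i⟩

end Lex

lemma setOf_edeg_eq_exists_le_image_add {n : ℕ} (N : Set (Fin n →₀ ℕ)) (s : Fin n →₀ ℕ)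
    (j : ℕ) :
    {c | edeg c = j + edeg s ∧ ∃ a ∈ (· + s) '' N, a ≤ c} =
      (· + s) '' {b | edeg b = j ∧ ∃ a ∈ N, a ≤ b} := by
  ext c
  constructor
  · rintro ⟨hc, _, ⟨a, ha, rfl⟩, hac⟩
    have hcs : c - s + s = c := tsub_add_cancel_of_le (le_add_self.trans hac)
    refine ⟨c - s, ⟨?_, a, ha, le_tsub_of_add_le_right hac⟩, hcs⟩
    have := edeg_add (c - s) s
    rw [hcs, hc] at this
    omega
  · rintro ⟨b, ⟨hb, a, ha, hab⟩, rfl⟩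
    exact ⟨by rw [edeg_add, hb], a + s, ⟨a, ha, rfl⟩, add_le_add hab le_rfl⟩

lemma hilb_add_eq_of_expSetDeg_eq_image_add {K : Type} [Field K] {n d : ℕ}
    {I I' : Ideal (MvPolynomial (Fin n) K)} {s : Fin n →₀ ℕ} (hI : GenBy I (edeg · = d))
    (hI' : GenBy I' (edeg · = d + edeg s))
    (h : expSetDeg I' (d + edeg s) = (· + s) '' expSetDeg I d) (δ : ℕ) :
    hilb I (d + δ) = hilb I' (d + edeg s + δ) := by
  rw [hI.hilb_eq_ncard, hI'.hilb_eq_ncard, hI.expSetDeg_eq, hI'.expSetDeg_eq, h,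
    Nat.add_right_comm, setOf_edeg_eq_exists_le_image_add,
    Set.ncard_image_of_injective _ (add_left_injective s)]

/-- Corollary `lex_ideals`(b),(c). Suppose `I` and `I'` are lexsegment
ideals of `S = K[x_1,…,x_n]` generated by monomials of degree `d` and `d'` respectively,
with `μ(I) = μ(I')` and `d' ≥ d`. Then `H_{I'}(T) = T^{d'−d} H_I(T)`; equivalently,
`H(I, d+δ) = H(I', d'+δ)` for all `δ ≥ 0`. -/
theorem lexsegment_hilbert_shift {K : Type} [Field K] {n d d' : ℕ}
    (I I' : Ideal (MvPolynomial (Fin n) K))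
    (hlex : IsLexsegment I) (hlex' : IsLexsegment I')
    (hgen : GenBy I (fun a => edeg a = d)) (hgen' : GenBy I' (fun a => edeg a = d'))
    (hmu : mu I = mu I') (hdd : d ≤ d') :
    ((PowerSeries.mk fun j => (hilb I' j)) =
      (PowerSeries.X : PowerSeries ℕ) ^ (d' - d) * PowerSeries.mk fun j => hilb I j) ∧
    (∀ δ : ℕ, hilb I (d + δ) = hilb I' (d' + δ)) := by
  have hcard : (expSetDeg I d).ncard = (expSetDeg I' d').ncard := by
    rw [← hgen.mu_eq_ncard, ← hgen'.mu_eq_ncard, hmu]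
  have hshift : ∀ δ, hilb I (d + δ) = hilb I' (d' + δ) := by
    rcases (expSetDeg I' d').eq_empty_or_nonempty with hN' | ⟨a', ha'⟩
    · have hN : expSetDeg I d = ∅ := by
        rw [← Set.ncard_eq_zero (finite_expSetDeg I d), hcard, hN', Set.ncard_empty]
      intro δ
      rw [hgen.hilb_eq_zero_of_expSetDeg_eq_empty hN, hgen'.hilb_eq_zero_of_expSetDeg_eq_empty hN']
    obtain ⟨s, hs, hs_first⟩ := exists_edeg_eq_of_le_edeg (e := d' - d) (a := a')
      (by rw [ha'.1]; omega)
    obtain rfl : d' = d + edeg s := by omega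
    have hN' : expSetDeg I' (d + edeg s) = (· + s) '' expSetDeg I d :=
      (hlex'.isLexSet_expSetDeg _).eq_of_ncard_eq ((hlex.isLexSet_expSetDeg d).image_add hs_first)
        (finite_expSetDeg _ _) ((finite_expSetDeg _ _).image _)
        (by rw [Set.ncard_image_of_injective _ (add_left_injective s), hcard])
    exact hilb_add_eq_of_expSetDeg_eq_image_add hgen hgen' hN'
  refine ⟨?_, hshift⟩
  ext j
  rw [PowerSeries.coeff_mk, PowerSeries.coeff_X_pow_mul', PowerSeries.coeff_mk]
  split_ifs with hj
  · rcases le_or_gt d' j with hdj | hjd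
    · obtain ⟨δ, rfl⟩ := Nat.exists_eq_add_of_le hdj
      rw [← hshift, show d' + δ - (d' - d) = d + δ by omega]
    · rw [hgen'.hilb_eq_zero_of_lt hjd, hgen.hilb_eq_zero_of_lt (by omega)]
  · exact hgen'.hilb_eq_zero_of_lt (by omega)
end
end
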